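/- arXiv:1604.08643 — 7 statements merged into one kernel-verified Lean document; each statement's English description precedes it below -/
import Mathlib

section
/- If f : [a,b] → ℝ is absolutely continuous with f' ∈ L^1([a,b]), then |∫_a^b f(x) dx − (b-a)(f(a)+f(b))/2| ≤ ‖f'‖_1 (b-a)/2. -/
open MeasureTheory intervalIntegral

/-- Trapezoidal rule error bound for `f` absolutely continuous with `f' ∈ L¹`. -/
theorem trapezoid_error_L1
    (a b : ℝ) (hab : a < b) (f g : ℝ → ℝ)
    (hg : IntervalIntegrable g volume a b)
    (hFTC : ∀ x ∈ Set.Icc a b, f x = f a + ∫ t in a..x, g t) :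
    |(∫ x in a..b, f x) - (b - a) * (f a + f b) / 2|
      ≤ (∫ x in a..b, |g x|) * (b - a) / 2 := by
  have hab' : a ≤ b := hab.le
  set c : ℝ := ∫ t in a..b, g t with hc
  set h : ℝ → ℝ := fun x => ∫ t in a..x, g t with hh
  have hcont : ContinuousOn h (Set.uIcc a b) :=
    intervalIntegral.continuousOn_primitive_interval' hg Set.left_mem_uIcc
  have hint : IntervalIntegrable h volume a b := hcont.intervalIntegrable
  have hint2 : IntervalIntegrable (fun x => h x - c / 2) volume a b :=
    hint.sub (intervalIntegrable_const)
  have hfb : f b = f a + c := hFTC b ⟨hab', le_refl b⟩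
  have hf : (∫ x in a..b, f x) = ∫ x in a..b, (f a + h x) := by
    apply intervalIntegral.integral_congr
    intro x hx
    rw [Set.uIcc_of_le hab'] at hx
    exact hFTC x hx
  have key : (∫ x in a..b, f x) - (b - a) * (f a + f b) / 2
      = ∫ x in a..b, (h x - c / 2) := by
    rw [hf, hfb, intervalIntegral.integral_add (intervalIntegrable_const) hint,
      intervalIntegral.integral_sub hint (intervalIntegrable_const)]
    simp only [intervalIntegral.integral_const, smul_eq_mul]
    ring
  rw [key]
  have habs : IntervalIntegrable (fun x => |g x|) volume a b := hg.abs
  have step1 : |∫ x in a..b, (h x - c / 2)| ≤ ∫ x in a..b, |h x - c / 2| :=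
    intervalIntegral.abs_integral_le_integral_abs hab'
  have step2 : (∫ x in a..b, |h x - c / 2|)
      ≤ ∫ _ in a..b, (∫ t in a..b, |g t|) / 2 := by
    apply intervalIntegral.integral_mono_on hab' hint2.abs intervalIntegrable_const
    intro x hx
    have hax : IntervalIntegrable g volume a x :=
      hg.mono_set (by rw [Set.uIcc_of_le hx.1, Set.uIcc_of_le hab']; exact Set.Icc_subset_Icc le_rfl hx.2)
    have hxb : IntervalIntegrable g volume x b :=
      hg.mono_set (by rw [Set.uIcc_of_le hx.2, Set.uIcc_of_le hab']; exact Set.Icc_subset_Icc hx.1 le_rfl)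
    have hsplit : (∫ t in a..x, g t) + (∫ t in x..b, g t) = c :=
      intervalIntegral.integral_add_adjacent_intervals hax hxb
    have hsplit_abs : (∫ t in a..x, |g t|) + (∫ t in x..b, |g t|) = ∫ t in a..b, |g t| :=
      intervalIntegral.integral_add_adjacent_intervals hax.abs hxb.abs
    have h1 : |∫ t in a..x, g t| ≤ ∫ t in a..x, |g t| :=
      intervalIntegral.abs_integral_le_integral_abs hx.1
    have h2 : |∫ t in x..b, g t| ≤ ∫ t in x..b, |g t| :=
      intervalIntegral.abs_integral_le_integral_abs hx.2
    have : h x - c / 2 = ((∫ t in a..x, g t) - (∫ t in x..b, g t)) / 2 := by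
      rw [← hsplit]; simp only [hh]; ring
    rw [this, ← hsplit_abs, abs_div, abs_two]
    have := (abs_sub _ _).trans (add_le_add h1 h2)
    linarith
  have step3 : (∫ _ in a..b, (∫ t in a..b, |g t|) / 2 : ℝ)
      = (∫ x in a..b, |g x|) * (b - a) / 2 := by
    rw [intervalIntegral.integral_const, smul_eq_mul]; ring
  calc |∫ x in a..b, (h x - c / 2)| ≤ _ := step1
    _ ≤ _ := step2
    _ = _ := step3
end

section
/- If f : [a,b] → ℝ is absolutely continuous with f' ∈ L^p([a,b]) for some 1 < p < ∞ and q is the conjugate exponent, then |∫_a^b f(x) dx − (b-a)(f(a)+f(b))/2| ≤ (1/2)(1/(q+1))^{1/q} ‖f'‖_p (b-a)^{1+1/q}. -/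
/-!
With `F x = ∫_a^x g`, integration by parts for absolutely continuous functions gives
`∫_a^b F = ∫_a^b (b - t) g t dt`, so the trapezoid error equals the Peano kernel integral
`∫_a^b ((a + b)/2 - t) g t dt`. Hölder's inequality bounds it by `‖g‖_p` times the `L^q` norm of
the kernel, which is `(1/2) (1/(q+1))^(1/q) (b - a)^(1 + 1/q)`.
-/

open MeasureTheory intervalIntegral

theorem integral_primitive_eq_integral_sub_mul {a b : ℝ} {g : ℝ → ℝ}
    (hg : IntervalIntegrable g volume a b) :
    ∫ x in a..b, ∫ t in a..x, g t = ∫ t in a..b, (b - t) * g t := by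
  have hF := hg.absolutelyContinuousOnInterval_intervalIntegral Set.left_mem_uIcc
  have hK : AbsolutelyContinuousOnInterval (fun x => x - b) a b :=
    (contDiff_id.sub contDiff_const).contDiffOn.absolutelyContinuousOnInterval
  have hderiv : ∀ᵐ x, x ∈ Set.uIoc a b →
      deriv (fun y => ∫ t in a..y, g t) x * (x - b) = -((b - x) * g x) := by
    filter_upwards [hg.ae_hasDerivAt_integral] with x hx hxab
    rw [(hx (Set.uIoc_subset_uIcc hxab) a Set.left_mem_uIcc).deriv]
    ring
  simpa only [deriv_sub_const, deriv_id'', mul_one, integral_same, sub_self, mul_zero, zero_mul,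
    integral_congr_ae hderiv, intervalIntegral.integral_neg, sub_neg_eq_add, zero_add] using
    hF.integral_mul_deriv_eq_deriv_mul hK

theorem integral_sub_trapezoid_eq_integral_mul {a b : ℝ} {f g : ℝ → ℝ}
    (hg : IntervalIntegrable g volume a b)
    (hf : ∀ x ∈ Set.uIcc a b, f x = f a + ∫ t in a..x, g t) :
    (∫ x in a..b, f x) - (b - a) * (f a + f b) / 2 = ∫ t in a..b, ((a + b) / 2 - t) * g t := by
  have hprim : IntervalIntegrable (fun x => ∫ t in a..x, g t) volume a b :=
    (continuousOn_primitive_interval' hg Set.left_mem_uIcc).intervalIntegrable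
  have hb : f b = f a + ∫ t in a..b, g t := hf b Set.right_mem_uIcc
  have hkernel : ∫ t in a..b, ((a + b) / 2 - t) * g t
      = (∫ t in a..b, (b - t) * g t) - (b - a) / 2 * ∫ t in a..b, g t := by
    have hbg : IntervalIntegrable (fun t => (b - t) * g t) volume a b :=
      hg.continuousOn_mul (continuousOn_const.sub continuousOn_id)
    rw [← intervalIntegral.integral_const_mul, ← integral_sub hbg (hg.const_mul _)]
    exact integral_congr fun t _ => by ring
  rw [integral_congr hf, integral_add intervalIntegrable_const hprim,
    intervalIntegral.integral_const, integral_primitive_eq_integral_sub_mul hg, hkernel, hb,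
    smul_eq_mul]
  ring

theorem memLp_ofReal_of_integrable_abs_rpow {α : Type*} [MeasurableSpace α] {μ : Measure α}
    {f : α → ℝ} {p : ℝ} (hp : 0 < p) (hf : AEStronglyMeasurable f μ)
    (hfp : Integrable (fun x => |f x| ^ p) μ) : MemLp f (ENNReal.ofReal p) μ := by
  rw [← integrable_norm_rpow_iff hf (by simpa using hp) ENNReal.ofReal_ne_top,
    ENNReal.toReal_ofReal hp.le]
  simpa only [Real.norm_eq_abs] using hfp

theorem abs_integral_mul_le_Lp_mul_Lq {a b p q : ℝ} {f g : ℝ → ℝ} (hab : a ≤ b)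
    (hpq : p.HolderConjugate q) (hf : IntervalIntegrable f volume a b)
    (hfp : IntervalIntegrable (fun x => |f x| ^ p) volume a b)
    (hg : IntervalIntegrable g volume a b)
    (hgq : IntervalIntegrable (fun x => |g x| ^ q) volume a b) :
    |∫ x in a..b, f x * g x|
      ≤ (∫ x in a..b, |f x| ^ p) ^ (1 / p) * (∫ x in a..b, |g x| ^ q) ^ (1 / q) := by
  simp only [integral_of_le hab, ← Real.norm_eq_abs]
  calc ‖∫ x in Set.Ioc a b, f x * g x‖ ≤ ∫ x in Set.Ioc a b, ‖f x‖ * ‖g x‖ := by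
        simpa only [norm_mul] using norm_integral_le_integral_norm (fun x => f x * g x)
    _ ≤ _ := integral_mul_norm_le_Lp_mul_Lq hpq
        (memLp_ofReal_of_integrable_abs_rpow hpq.pos hf.1.aestronglyMeasurable hfp.1)
        (memLp_ofReal_of_integrable_abs_rpow hpq.symm.pos hg.1.aestronglyMeasurable hgq.1)

theorem integral_abs_rpow_neg_self {r q : ℝ} (hr : 0 ≤ r) (hq : 0 ≤ q) :
    ∫ t in -r..r, |t| ^ q = 2 * (r ^ (q + 1) / (q + 1)) := by
  have hcont : Continuous fun t : ℝ => |t| ^ q :=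
    (Real.continuous_rpow_const hq).comp continuous_abs
  have hright : ∫ t in (0 : ℝ)..r, |t| ^ q = r ^ (q + 1) / (q + 1) := by
    rw [integral_congr fun t ht => by rw [abs_of_nonneg (Set.uIcc_of_le hr ▸ ht).1],
      integral_rpow (Or.inl (by linarith)), Real.zero_rpow (by linarith), sub_zero]
  have hleft : ∫ t in -r..0, |t| ^ q = ∫ t in (0 : ℝ)..r, |t| ^ q := by
    simpa only [abs_neg, neg_zero, neg_neg] using
      (integral_comp_neg (fun t => |t| ^ q) (a := 0) (b := r)).symm
  rw [← integral_add_adjacent_intervals (hcont.intervalIntegrable _ 0)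
    (hcont.intervalIntegrable 0 r), hleft, hright]
  ring

theorem integral_abs_midpoint_sub_rpow {a b q : ℝ} (hab : a ≤ b) (hq : 0 ≤ q) :
    ∫ t in a..b, |(a + b) / 2 - t| ^ q = 2 * (((b - a) / 2) ^ (q + 1) / (q + 1)) := by
  rw [integral_comp_sub_left (fun t => |t| ^ q), show (a + b) / 2 - b = -((b - a) / 2) by ring,
    show (a + b) / 2 - a = (b - a) / 2 by ring]
  exact integral_abs_rpow_neg_self (by linarith) hq

theorem rpow_integral_abs_midpoint_sub_rpow {a b q : ℝ} (hab : a ≤ b) (hq : 0 < q) :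
    (∫ t in a..b, |(a + b) / 2 - t| ^ q) ^ (1 / q)
      = 1 / 2 * (1 / (q + 1)) ^ (1 / q) * (b - a) ^ (1 + 1 / q) := by
  have hba : 0 ≤ b - a := sub_nonneg.mpr hab
  have hsplit : 2 * (((b - a) / 2) ^ (q + 1) / (q + 1))
      = (1 / 2) ^ q * (1 / (q + 1)) * (b - a) ^ (q + 1) := by
    rw [Real.div_rpow hba zero_le_two, Real.div_rpow zero_le_one zero_le_two, Real.one_rpow,
      Real.rpow_add_one two_ne_zero]
    field_simp
  rw [integral_abs_midpoint_sub_rpow hab hq.le, hsplit,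
    Real.mul_rpow (by positivity) (by positivity), Real.mul_rpow (by positivity) (by positivity),
    ← Real.rpow_mul (by norm_num), ← Real.rpow_mul hba, mul_one_div_cancel hq.ne', Real.rpow_one,
    add_mul, one_mul, mul_one_div_cancel hq.ne', add_comm (1 : ℝ)]

/-- Trapezoidal rule error bound for `f` absolutely continuous with `f' ∈ L^p`, `1 < p < ∞`. -/
theorem trapezoid_error_Lp
    (a b : ℝ) (hab : a < b) (p q : ℝ) (hp : 1 < p) (hpq : 1 / p + 1 / q = 1)
    (f g : ℝ → ℝ)
    (hg : IntervalIntegrable g volume a b)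
    (hFTC : ∀ x ∈ Set.Icc a b, f x = f a + ∫ t in a..x, g t)
    (hgp : IntervalIntegrable (fun x => |g x| ^ p) volume a b) :
    |(∫ x in a..b, f x) - (b - a) * (f a + f b) / 2|
      ≤ (1 / 2) * (1 / (q + 1)) ^ (1 / q) * (∫ x in a..b, |g x| ^ p) ^ (1 / p) *
          (b - a) ^ (1 + 1 / q) := by
  have hpq' : q.HolderConjugate p :=
    (Real.holderConjugate_iff.mpr ⟨hp, by simpa only [one_div] using hpq⟩).symm
  have hkernel : Continuous fun t => (a + b) / 2 - t := continuous_const.sub continuous_id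
  have hkernel_q : Continuous fun t => |(a + b) / 2 - t| ^ q :=
    (Real.continuous_rpow_const hpq'.nonneg).comp hkernel.abs
  rw [integral_sub_trapezoid_eq_integral_mul hg (Set.uIcc_of_le hab.le ▸ hFTC)]
  calc |∫ t in a..b, ((a + b) / 2 - t) * g t|
      ≤ (∫ t in a..b, |(a + b) / 2 - t| ^ q) ^ (1 / q) * (∫ t in a..b, |g t| ^ p) ^ (1 / p) :=
        abs_integral_mul_le_Lp_mul_Lq hab.le hpq' (hkernel.intervalIntegrable a b)
          (hkernel_q.intervalIntegrable a b) hg hgp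
    _ = _ := by rw [rpow_integral_abs_midpoint_sub_rpow hab.le hpq'.pos]; ring
end

section
/- If f : [a,b] → ℝ has absolutely continuous (n-1)st derivative with f^{(n)} ∈ L^1([a,b]), then the quadrature error with φ_n(x) = (b-a)^n 2^{1-2n} T_n((2x-a-b)/(b-a)) satisfies |E_n(f)| ≤ ‖f^{(n)}‖_1 (b-a)^n / (2^{2n-1} n!), where T_n is the Chebyshev polynomial of the first kind. -/
open MeasureTheory Polynomial intervalIntegral

lemma chebyshevT_abs_le_one (n : ℤ) (u : ℝ) (hu : u ∈ Set.Icc (-1 : ℝ) 1) :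
    |(Polynomial.Chebyshev.T ℝ n).eval u| ≤ 1 := by
  have : u = Real.cos (Real.arccos u) := (Real.cos_arccos hu.1 hu.2).symm
  rw [this, Polynomial.Chebyshev.T_real_cos]
  exact Real.abs_cos_le_one _

/-- Sharp error bound for the corrected trapezoidal rule with the Chebyshev polynomial of
the first kind when `f⁽ⁿ⁾ ∈ L¹([a,b])`. -/
theorem corrected_trapezoid_error_chebyshevT
    (a b : ℝ) (hab : a < b) (n : ℕ) (hn : 1 ≤ n)
    (f g : ℝ → ℝ)
    (hf : ContDiffOn ℝ (n - 1 : ℕ) f (Set.Icc a b))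
    (hg : IntervalIntegrable g volume a b)
    (hFTC : ∀ x ∈ Set.Icc a b,
      iteratedDeriv (n - 1) f x = iteratedDeriv (n - 1) f a + ∫ t in a..x, g t) :
    |((-1 : ℝ) ^ n / n.factorial) *
        ∫ x in a..b, g x *
          ((b - a) ^ n / 2 ^ (2 * n - 1) *
            (Polynomial.Chebyshev.T ℝ n).eval ((2 * x - a - b) / (b - a)))|
      ≤ (∫ x in a..b, |g x|) * (b - a) ^ n / (2 ^ (2 * n - 1) * n.factorial) := by
  have hba : (0:ℝ) < b - a := by linarith
  set M : ℝ := (b - a) ^ n / 2 ^ (2 * n - 1) with hM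
  have hM0 : 0 ≤ M := by positivity
  have hIcc : a ≤ b := hab.le
  -- continuity of the weight
  have hcont : Continuous fun x : ℝ =>
      M * (Polynomial.Chebyshev.T ℝ n).eval ((2 * x - a - b) / (b - a)) := by
    fun_prop
  have hint : IntervalIntegrable (fun x => g x *
      (M * (Polynomial.Chebyshev.T ℝ n).eval ((2 * x - a - b) / (b - a)))) volume a b :=
    hg.mul_continuousOn hcont.continuousOn
  -- pointwise bound
  have hpt : ∀ x ∈ Set.Icc a b,
      |g x * (M * (Polynomial.Chebyshev.T ℝ n).eval ((2 * x - a - b) / (b - a)))|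
        ≤ |g x| * M := by
    intro x hx
    rw [abs_mul]
    have hu : (2 * x - a - b) / (b - a) ∈ Set.Icc (-1 : ℝ) 1 := by
      constructor
      · rw [le_div_iff₀ hba]; nlinarith [hx.1]
      · rw [div_le_iff₀ hba]; nlinarith [hx.2]
    have hT := chebyshevT_abs_le_one n _ hu
    calc |g x| * |M * (Polynomial.Chebyshev.T ℝ n).eval ((2 * x - a - b) / (b - a))|
        ≤ |g x| * (M * 1) := by
          gcongr
          rw [abs_mul, abs_of_nonneg hM0]
          gcongr
      _ = |g x| * M := by ring
  have key : |∫ x in a..b, g x *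
      (M * (Polynomial.Chebyshev.T ℝ n).eval ((2 * x - a - b) / (b - a)))|
      ≤ (∫ x in a..b, |g x|) * M := by
    calc |∫ x in a..b, g x * (M * (Polynomial.Chebyshev.T ℝ n).eval ((2 * x - a - b) / (b - a)))|
        ≤ ∫ x in a..b, |g x * (M * (Polynomial.Chebyshev.T ℝ n).eval ((2 * x - a - b) / (b - a)))| := by
          simpa only [Real.norm_eq_abs] using intervalIntegral.norm_integral_le_integral_norm (f := fun x => g x *
            (M * (Polynomial.Chebyshev.T ℝ n).eval ((2 * x - a - b) / (b - a)))) hIcc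
      _ ≤ ∫ x in a..b, |g x| * M := by
          apply intervalIntegral.integral_mono_on hIcc hint.abs (hg.abs.mul_const M)
          exact hpt
      _ = (∫ x in a..b, |g x|) * M := by
          rw [← intervalIntegral.integral_mul_const]
  rw [abs_mul, abs_div, abs_pow, abs_neg, abs_one, one_pow]
  have hfac : |(n.factorial : ℝ)| = n.factorial := abs_of_nonneg (by positivity)
  rw [hfac]
  calc 1 / (n.factorial : ℝ) * |∫ x in a..b, g x *
        (M * (Polynomial.Chebyshev.T ℝ n).eval ((2 * x - a - b) / (b - a)))|
      ≤ 1 / (n.factorial : ℝ) * ((∫ x in a..b, |g x|) * M) :=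
        mul_le_mul_of_nonneg_left key (by positivity)
    _ = (∫ x in a..b, |g x|) * (b - a) ^ n / (2 ^ (2 * n - 1) * n.factorial) := by
        rw [hM]; ring
end

section
/- The monic polynomial 2^{1-n} T_n, where T_n is the Chebyshev polynomial of the first kind, has sup-norm exactly 2^{1-n} on [-1,1], and every monic polynomial of degree n has sup-norm at least 2^{1-n} on [-1,1]. -/
/-!
The bounds for `2^{1-n} Tₙ` and their attainment at `x = 1` come from `Tₙ (cos θ) = cos (n θ)`.
If a monic `p` of degree `n` had `|p| < 2^{1-n}` on `[-1, 1]`, then `P = 2^{n-1} p` would satisfy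
`|P| ≤ 1` there while having the leading coefficient `2^{n-1}` of `Tₙ`; Chebyshev's coefficient
bound (Lagrange interpolation at the extremal nodes of `Tₙ`) then forces `P = Tₙ`, contradicting
`|P 1| < 1 = Tₙ 1`.
-/

open Polynomial

theorem zpow_one_sub_natCast_eq_inv_pow {K : Type*} [DivisionRing K] (a : K) {n : ℕ}
    (hn : 1 ≤ n) : a ^ ((1 : ℤ) - n) = (a ^ (n - 1))⁻¹ := by
  rw [← zpow_natCast, ← zpow_neg]
  congr 1
  omega

namespace Polynomial.Chebyshev

theorem exists_one_le_abs_eval_of_coeff_eq {n : ℕ} {P : ℝ[X]} (hPdeg : P.degree ≤ n)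
    (hPcoeff : P.coeff n = 2 ^ (n - 1)) : ∃ x ∈ Set.Icc (-1 : ℝ) 1, 1 ≤ |P.eval x| := by
  by_contra! hlt
  have hPT : P = T ℝ n :=
    (coeff_eq_iff_of_forall_abs_le_one hPdeg fun x hx => (hlt x hx).le).mp hPcoeff
  simpa [hPT] using hlt 1 (by norm_num)

end Polynomial.Chebyshev

theorem Polynomial.Monic.exists_inv_two_pow_le_abs_eval {p : ℝ[X]} (hp : p.Monic) :
    ∃ x ∈ Set.Icc (-1 : ℝ) 1, ((2 : ℝ) ^ (p.natDegree - 1))⁻¹ ≤ |p.eval x| := by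
  have hpos : (0 : ℝ) < 2 ^ (p.natDegree - 1) := by positivity
  obtain ⟨x, hx, hle⟩ := Chebyshev.exists_one_le_abs_eval_of_coeff_eq (n := p.natDegree)
    (P := C (2 ^ (p.natDegree - 1)) * p) ((degree_C_mul hpos.ne').trans_le degree_le_natDegree)
    (by rw [coeff_C_mul, hp.coeff_natDegree, mul_one])
  refine ⟨x, hx, ?_⟩
  rwa [eval_mul, eval_C, abs_mul, abs_of_pos hpos, ← inv_mul_le_iff₀ hpos, mul_one] at hle

/-- Chebyshev's extremal theorem: the monic polynomial `2^{1-n} Tₙ` has sup-norm exactly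
`2^{1-n}` on `[-1,1]`, and every monic polynomial of degree `n` has sup-norm at least
`2^{1-n}` there. -/
theorem chebyshev_minimal_sup_norm (n : ℕ) (hn : 1 ≤ n) :
    (∀ x ∈ Set.Icc (-1 : ℝ) 1,
        |(2 : ℝ) ^ ((1 : ℤ) - n) * (Polynomial.Chebyshev.T ℝ n).eval x|
          ≤ (2 : ℝ) ^ ((1 : ℤ) - n))
    ∧ (∃ x ∈ Set.Icc (-1 : ℝ) 1,
        |(2 : ℝ) ^ ((1 : ℤ) - n) * (Polynomial.Chebyshev.T ℝ n).eval x|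
          = (2 : ℝ) ^ ((1 : ℤ) - n))
    ∧ ∀ p : Polynomial ℝ, p.Monic → p.natDegree = n →
        ∃ x ∈ Set.Icc (-1 : ℝ) 1, (2 : ℝ) ^ ((1 : ℤ) - n) ≤ |p.eval x| := by
  have hc : (0 : ℝ) < 2 ^ ((1 : ℤ) - n) := by positivity
  refine ⟨fun x hx => ?_, ⟨1, by norm_num, by simp [abs_of_pos hc]⟩, fun p hp hpn => ?_⟩
  · rw [abs_mul, abs_of_pos hc]
    exact mul_le_of_le_one_right hc.le
      (Chebyshev.abs_eval_T_real_le_one n (abs_le.mpr hx))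
  · rw [zpow_one_sub_natCast_eq_inv_pow 2 hn, ← hpn]
    exact hp.exists_inv_two_pow_le_abs_eval
end

section
/- Among all monic polynomials of degree n, the polynomial 2^n (n!)² P_n(x) / (2n)! uniquely minimizes the L² norm on [-1,1], where P_n is the Legendre polynomial, and its squared L² norm is (2^n (n!)²/(2n)!)² · 2/(2n+1). -/
/-!
Write `⟨p, q⟩ = ∫₋₁¹ p q`. The first `n - 1` derivatives of `(X² - 1)ⁿ` vanish at `±1`, so
integrating by parts `n` times against the Rodrigues form `Pₙ ∝ Dⁿ (X² - 1)ⁿ` gives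
`⟨Pₙ, q⟩ ∝ ⟨(X² - 1)ⁿ, Dⁿ q⟩`. This vanishes when `deg q < n`, and for `q = Pₙ` it reduces to
`∫₋₁¹ (x² - 1)ⁿ`, which satisfies a two-term recurrence. Hence the monic multiple `m` of `Pₙ` is
orthogonal to every polynomial of lower degree, and every other monic `p` of degree `n` satisfies
`‖p‖² = ‖m‖² + ‖p - m‖²` with `‖p - m‖² > 0`.
-/

open MeasureTheory Polynomial intervalIntegral

/-- The degree-`n` Legendre polynomial, via Rodrigues' formula. -/
noncomputable def legendre (n : ℕ) : Polynomial ℝ :=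
  Polynomial.C (1 / (2 ^ n * (n.factorial : ℝ))) *
    Polynomial.derivative^[n] ((Polynomial.X ^ 2 - 1) ^ n)

noncomputable def polyIntegral (a b : ℝ) : ℝ[X] →ₗ[ℝ] ℝ where
  toFun p := ∫ x in a..b, p.eval x
  map_add' p q := by
    simpa using
      integral_add (p.continuous.intervalIntegrable a b) (q.continuous.intervalIntegrable a b)
  map_smul' c p := by simp

section polyIntegral

variable {a b : ℝ}

theorem polyIntegral_apply (p : ℝ[X]) : polyIntegral a b p = ∫ x in a..b, p.eval x := rfl

theorem polyIntegral_C_mul (c : ℝ) (p : ℝ[X]) :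
    polyIntegral a b (C c * p) = c * polyIntegral a b p := by
  rw [← smul_eq_C_mul, map_smul, smul_eq_mul]

theorem polyIntegral_derivative (p : ℝ[X]) :
    polyIntegral a b (derivative p) = p.eval b - p.eval a :=
  integral_eq_sub_of_hasDerivAt (fun x _ ↦ p.hasDerivAt x)
    (p.derivative.continuous.intervalIntegrable a b)

theorem polyIntegral_derivative_mul (p q : ℝ[X]) :
    polyIntegral a b (derivative p * q) =
      (p * q).eval b - (p * q).eval a - polyIntegral a b (p * derivative q) := by
  rw [← polyIntegral_derivative, derivative_mul, map_add]
  ring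

theorem polyIntegral_iterate_derivative_mul {p : ℝ[X]} {m : ℕ}
    (hp : ∀ k < m, (derivative^[k] p).IsRoot a ∧ (derivative^[k] p).IsRoot b) (q : ℝ[X]) :
    polyIntegral a b (derivative^[m] p * q) =
      (-1) ^ m * polyIntegral a b (p * derivative^[m] q) := by
  induction m generalizing q with
  | zero => simp
  | succ m ih =>
    obtain ⟨ha, hb⟩ := hp m m.lt_succ_self
    rw [Function.iterate_succ_apply', polyIntegral_derivative_mul, eval_mul, eval_mul, ha.eq_zero,
      hb.eq_zero, ih (fun k hk ↦ hp k (hk.trans m.lt_succ_self)), Function.iterate_succ_apply]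
    ring

theorem polyIntegral_sq_nonneg (hab : a ≤ b) (p : ℝ[X]) : 0 ≤ polyIntegral a b (p ^ 2) :=
  integral_nonneg hab fun x _ ↦ by simpa using sq_nonneg (p.eval x)

theorem polyIntegral_sq_pos (hab : a < b) {p : ℝ[X]} (hp : p ≠ 0) :
    0 < polyIntegral a b (p ^ 2) := by
  obtain ⟨x, hx, hpx⟩ : ∃ x ∈ Set.Icc a b, p.eval x ≠ 0 := by
    by_contra! h
    exact hp (p.eq_zero_of_infinite_isRoot ((Set.Icc_infinite hab).mono h))
  refine integral_pos hab (p ^ 2).continuous.continuousOn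
    (fun y _ ↦ by simpa using sq_nonneg (p.eval y)) ⟨x, hx, ?_⟩
  rw [eval_pow]
  positivity

theorem polyIntegral_sq_le_of_monic_of_orthogonal (hab : a < b) {m p : ℝ[X]} (hm : m.Monic)
    (horth : ∀ q : ℝ[X], q.degree < m.degree → polyIntegral a b (m * q) = 0)
    (hp : p.Monic) (hpm : p.degree = m.degree) :
    polyIntegral a b (m ^ 2) ≤ polyIntegral a b (p ^ 2) ∧
      (polyIntegral a b (p ^ 2) = polyIntegral a b (m ^ 2) → p = m) := by
  have hdeg : (p - m).degree < m.degree := by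
    simpa [hpm] using degree_sub_lt_left hpm hp.ne_zero (by rw [hp.leadingCoeff, hm.leadingCoeff])
  have hpythagoras :
      polyIntegral a b (p ^ 2) = polyIntegral a b (m ^ 2) + polyIntegral a b ((p - m) ^ 2) := by
    rw [show p ^ 2 = m ^ 2 + C 2 * (m * (p - m)) + (p - m) ^ 2 by rw [C_ofNat]; ring, map_add,
      map_add, polyIntegral_C_mul, horth _ hdeg, mul_zero, add_zero]
  refine ⟨?_, fun h ↦ ?_⟩
  · linarith [polyIntegral_sq_nonneg hab.le (p - m)]
  · by_contra hne
    linarith [polyIntegral_sq_pos hab (sub_ne_zero.mpr hne)]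

end polyIntegral

theorem Polynomial.Monic.coeff_iterate_derivative_natDegree_sub {R : Type*} [Semiring R]
    {p : R[X]} (hp : p.Monic) {k : ℕ} (hk : k ≤ p.natDegree) :
    (derivative^[k] p).coeff (p.natDegree - k) = (p.natDegree.descFactorial k : R) := by
  rw [coeff_iterate_derivative, Nat.sub_add_cancel hk, hp.coeff_natDegree, nsmul_one]

theorem Polynomial.Monic.iterate_derivative_natDegree {R : Type*} [Semiring R] {p : R[X]}
    (hp : p.Monic) : derivative^[p.natDegree] p = C (p.natDegree.factorial : R) := by
  rw [eq_C_of_natDegree_le_zero ((natDegree_iterate_derivative p _).trans_eq (Nat.sub_self _)),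
    ← Nat.sub_self p.natDegree, hp.coeff_iterate_derivative_natDegree_sub le_rfl,
    Nat.descFactorial_self]

section XSqSubOne

variable {R : Type*} [CommRing R]

theorem monic_X_sq_sub_one : (X ^ 2 - 1 : R[X]).Monic := by
  simpa using monic_X_pow_sub_C (1 : R) two_ne_zero

theorem natDegree_X_sq_sub_one_pow [Nontrivial R] (n : ℕ) :
    ((X ^ 2 - 1 : R[X]) ^ n).natDegree = 2 * n := by
  rw [monic_X_sq_sub_one.natDegree_pow, ← C_1, natDegree_X_pow_sub_C, mul_comm]

theorem isRoot_iterate_derivative_X_sq_sub_one_pow {n k : ℕ} (hk : k < n) {x : R}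
    (hx : x ^ 2 = 1) : (derivative^[k] ((X ^ 2 - 1 : R[X]) ^ n)).IsRoot x := by
  obtain ⟨q, hq⟩ := pow_sub_dvd_iterate_derivative_pow (X ^ 2 - 1 : R[X]) n k
  obtain ⟨j, hj⟩ := Nat.exists_eq_add_of_lt (Nat.sub_pos_of_lt hk)
  simp [IsRoot, hq, hj, hx]

end XSqSubOne

theorem derivative_X_mul_X_sq_sub_one_pow_succ (n : ℕ) :
    derivative (X * (X ^ 2 - 1 : ℝ[X]) ^ (n + 1)) =
      C (2 * n + 3 : ℝ) * (X ^ 2 - 1) ^ (n + 1) + C (2 * n + 2 : ℝ) * (X ^ 2 - 1) ^ n := by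
  rw [derivative_mul, derivative_pow_succ]
  simp only [derivative_X, derivative_sub, derivative_X_sq, derivative_one, map_add, map_mul,
    map_natCast, map_one, C_ofNat]
  ring

theorem polyIntegral_X_sq_sub_one_pow_succ (n : ℕ) :
    (2 * n + 3) * polyIntegral (-1) 1 ((X ^ 2 - 1 : ℝ[X]) ^ (n + 1)) =
      -((2 * n + 2) * polyIntegral (-1) 1 ((X ^ 2 - 1 : ℝ[X]) ^ n)) := by
  have h := polyIntegral_derivative (a := -1) (b := 1) (X * (X ^ 2 - 1 : ℝ[X]) ^ (n + 1))
  rw [derivative_X_mul_X_sq_sub_one_pow_succ, map_add, polyIntegral_C_mul,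
    polyIntegral_C_mul] at h
  simp only [eval_mul, eval_pow, eval_sub, eval_X, eval_one] at h
  norm_num at h
  linarith

theorem polyIntegral_X_sq_sub_one_pow (n : ℕ) :
    (-1) ^ n * polyIntegral (-1) 1 ((X ^ 2 - 1 : ℝ[X]) ^ n) * (2 * n + 1).factorial =
      2 ^ (2 * n + 1) * n.factorial ^ 2 := by
  induction n with
  | zero => norm_num [polyIntegral_apply]
  | succ n ih =>
    have h := polyIntegral_X_sq_sub_one_pow_succ n
    rw [show 2 * (n + 1) + 1 = 2 * n + 1 + 1 + 1 by ring, Nat.factorial_succ (2 * n + 1 + 1),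
      Nat.factorial_succ (2 * n + 1), Nat.factorial_succ n]
    push_cast
    linear_combination -(-1) ^ n * ((2 * n + 2) * (2 * n + 1).factorial) * h + 4 * (n + 1) ^ 2 * ih

theorem polyIntegral_legendre_mul (n : ℕ) (q : ℝ[X]) :
    polyIntegral (-1) 1 (legendre n * q) = (-1) ^ n / (2 ^ n * n.factorial) *
      polyIntegral (-1) 1 ((X ^ 2 - 1) ^ n * derivative^[n] q) := by
  rw [legendre, mul_assoc, polyIntegral_C_mul, polyIntegral_iterate_derivative_mul
    (fun _ hk ↦ ⟨isRoot_iterate_derivative_X_sq_sub_one_pow hk (by norm_num),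
      isRoot_iterate_derivative_X_sq_sub_one_pow hk (by norm_num)⟩)]
  ring

theorem polyIntegral_legendre_mul_eq_zero {n : ℕ} {q : ℝ[X]} (hq : q.degree < n) :
    polyIntegral (-1) 1 (legendre n * q) = 0 := by
  simp [polyIntegral_legendre_mul, iterate_derivative_eq_zero_of_degree_lt hq]

theorem natDegree_legendre_le (n : ℕ) : (legendre n).natDegree ≤ n :=
  (natDegree_C_mul_le _ _).trans <| (natDegree_iterate_derivative _ n).trans <| by
    rw [natDegree_X_sq_sub_one_pow]; omega

theorem coeff_legendre_self (n : ℕ) :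
    (legendre n).coeff n = (2 * n).factorial / (2 ^ n * n.factorial ^ 2) := by
  have h := ((monic_X_sq_sub_one (R := ℝ)).pow n).coeff_iterate_derivative_natDegree_sub (k := n)
    (by rw [natDegree_X_sq_sub_one_pow]; omega)
  rw [natDegree_X_sq_sub_one_pow, show 2 * n - n = n by omega] at h
  have hfac : (n.factorial * (2 * n).descFactorial n : ℝ) = (2 * n).factorial := by
    exact_mod_cast (show 2 * n - n = n by omega) ▸
      Nat.factorial_mul_descFactorial (by omega : n ≤ 2 * n)
  rw [legendre, coeff_C_mul, h, ← hfac]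
  field_simp

theorem iterate_derivative_legendre_self (n : ℕ) :
    derivative^[n] (legendre n) = C ((2 * n).factorial / (2 ^ n * n.factorial) : ℝ) := by
  have h := ((monic_X_sq_sub_one (R := ℝ)).pow n).iterate_derivative_natDegree
  rw [natDegree_X_sq_sub_one_pow, two_mul, Function.iterate_add_apply] at h
  rw [legendre, iterate_derivative_C_mul, h, ← C_mul, two_mul]
  ring_nf

theorem polyIntegral_legendre_sq (n : ℕ) :
    polyIntegral (-1) 1 (legendre n ^ 2) = 2 / (2 * n + 1) := by
  have hJ := polyIntegral_X_sq_sub_one_pow n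
  rw [sq, polyIntegral_legendre_mul, iterate_derivative_legendre_self, mul_comm ((X ^ 2 - 1) ^ n),
    polyIntegral_C_mul]
  rw [Nat.factorial_succ] at hJ
  field_simp
  push_cast at hJ
  linear_combination hJ

theorem natDegree_legendre (n : ℕ) : (legendre n).natDegree = n :=
  natDegree_eq_of_le_of_coeff_ne_zero (natDegree_legendre_le n)
    (by rw [coeff_legendre_self]; positivity)

theorem monic_C_mul_legendre (n : ℕ) :
    (C ((2 : ℝ) ^ n * n.factorial ^ 2 / (2 * n).factorial) * legendre n).Monic := by
  rw [Monic, leadingCoeff_mul, leadingCoeff_C, leadingCoeff, natDegree_legendre,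
    coeff_legendre_self]
  field_simp

theorem legendre_minimal_L2_norm_general (n : ℕ) :
    (∀ p : Polynomial ℝ, p.Monic → p.natDegree = n →
      (∫ x in (-1 : ℝ)..1,
          ((Polynomial.C ((2 : ℝ) ^ n * (n.factorial : ℝ) ^ 2 / ((2 * n).factorial : ℝ)) *
            legendre n).eval x) ^ 2)
        ≤ ∫ x in (-1 : ℝ)..1, (p.eval x) ^ 2
      ∧ ((∫ x in (-1 : ℝ)..1, (p.eval x) ^ 2)
            = ∫ x in (-1 : ℝ)..1,
              ((Polynomial.C ((2 : ℝ) ^ n * (n.factorial : ℝ) ^ 2 / ((2 * n).factorial : ℝ)) *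
                legendre n).eval x) ^ 2
          → p = Polynomial.C ((2 : ℝ) ^ n * (n.factorial : ℝ) ^ 2 / ((2 * n).factorial : ℝ)) *
                legendre n))
    ∧ (∫ x in (-1 : ℝ)..1,
          ((Polynomial.C ((2 : ℝ) ^ n * (n.factorial : ℝ) ^ 2 / ((2 * n).factorial : ℝ)) *
            legendre n).eval x) ^ 2)
        = ((2 : ℝ) ^ n * (n.factorial : ℝ) ^ 2 / ((2 * n).factorial : ℝ)) ^ 2 *
            (2 / (2 * n + 1)) := by
  have hm := monic_C_mul_legendre n
  set c : ℝ := 2 ^ n * n.factorial ^ 2 / (2 * n).factorial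
  have hdeg : (C c * legendre n).degree = n := by
    rw [degree_eq_natDegree hm.ne_zero, natDegree_C_mul (by positivity), natDegree_legendre]
  have horth (q : ℝ[X]) (hq : q.degree < (C c * legendre n).degree) :
      polyIntegral (-1) 1 (C c * legendre n * q) = 0 := by
    rw [mul_assoc, polyIntegral_C_mul, polyIntegral_legendre_mul_eq_zero (hdeg ▸ hq), mul_zero]
  simp only [← eval_pow, ← polyIntegral_apply]
  refine ⟨fun p hp hpn ↦ polyIntegral_sq_le_of_monic_of_orthogonal (by norm_num) hm horth hp ?_, ?_⟩
  · rw [hdeg, degree_eq_natDegree hp.ne_zero, hpn]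
  · rw [mul_pow, ← C_pow, polyIntegral_C_mul, polyIntegral_legendre_sq]

/-- Among monic polynomials of degree `n`, the normalized Legendre polynomial
`2ⁿ(n!)²/(2n)! · Pₙ` uniquely minimizes the `L²` norm on `[-1,1]`, and its squared `L²`
norm equals `(2ⁿ(n!)²/(2n)!)² · 2/(2n+1)`. -/
theorem legendre_minimal_L2_norm (n : ℕ) (hn : 1 ≤ n) :
    (∀ p : Polynomial ℝ, p.Monic → p.natDegree = n →
      (∫ x in (-1 : ℝ)..1,
          ((Polynomial.C ((2 : ℝ) ^ n * (n.factorial : ℝ) ^ 2 / ((2 * n).factorial : ℝ)) *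
            legendre n).eval x) ^ 2)
        ≤ ∫ x in (-1 : ℝ)..1, (p.eval x) ^ 2
      ∧ ((∫ x in (-1 : ℝ)..1, (p.eval x) ^ 2)
            = ∫ x in (-1 : ℝ)..1,
              ((Polynomial.C ((2 : ℝ) ^ n * (n.factorial : ℝ) ^ 2 / ((2 * n).factorial : ℝ)) *
                legendre n).eval x) ^ 2
          → p = Polynomial.C ((2 : ℝ) ^ n * (n.factorial : ℝ) ^ 2 / ((2 * n).factorial : ℝ)) *
                legendre n))
    ∧ (∫ x in (-1 : ℝ)..1,
          ((Polynomial.C ((2 : ℝ) ^ n * (n.factorial : ℝ) ^ 2 / ((2 * n).factorial : ℝ)) *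
            legendre n).eval x) ^ 2)
        = ((2 : ℝ) ^ n * (n.factorial : ℝ) ^ 2 / ((2 * n).factorial : ℝ)) ^ 2 *
            (2 / (2 * n + 1)) :=
  legendre_minimal_L2_norm_general n
end

section
/- If f : [a,b] → ℝ has absolutely continuous (n-1)st derivative with f^{(n)} ∈ L^∞([a,b]), then with φ_n(x) = ((b-a)/2)^n 2^{-n} U_n((2x-a-b)/(b-a)), the quadrature error satisfies |E_n(f)| ≤ ‖f^{(n)}‖_∞ (b-a)^{n+1} / (2^{2n} n!). -/
open MeasureTheory Polynomial intervalIntegral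
open scoped ENNReal

/-!
The error is the pairing of `f⁽ⁿ⁾ ∈ L^∞` with the kernel `φₙ`, so Hölder's inequality bounds it by
`‖f⁽ⁿ⁾‖_∞ ‖φₙ‖₁ / n!`. After the affine change of variables onto `[-1, 1]` and the substitution
`x = cos θ`, the identity `Uₙ(cos θ) sin θ = sin((n + 1) θ)` turns `‖Uₙ‖_{L¹[-1,1]}` into
`∫₀^π |sin((n + 1) θ)| dθ = 2`, whence `‖φₙ‖₁ = (b - a)^(n+1) / 2^(2n)`.
-/

section

open Real

theorem integral_abs_sin_zero_natCast_mul_pi (k : ℕ) :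
    ∫ x in (0 : ℝ)..k * π, |sin x| = 2 * k := by
  have hperiodic : Function.Periodic (fun x => |sin x|) π := fun x => by
    simp [sin_add_pi, abs_neg]
  have hone : ∫ x in (0 : ℝ)..π, |sin x| = 2 := by
    rw [integral_congr (g := sin) fun x hx => abs_of_nonneg <|
      sin_nonneg_of_mem_Icc (by rwa [Set.uIcc_of_le pi_pos.le] at hx)]
    norm_num [integral_sin]
  have hshift := hperiodic.intervalIntegral_add_zsmul_eq (k : ℤ) 0
    fun t₁ t₂ => continuous_sin.abs.intervalIntegrable t₁ t₂
  simp only [zero_add, zsmul_eq_mul, Int.cast_natCast] at hshift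
  rw [hshift, hone]
  ring

theorem integral_abs_sin_natCast_mul {k : ℕ} (hk : k ≠ 0) :
    ∫ θ in (0 : ℝ)..π, |sin (k * θ)| = 2 := by
  have hk' : (k : ℝ) ≠ 0 := Nat.cast_ne_zero.2 hk
  rw [integral_comp_mul_left (fun x => |sin x|) hk', mul_zero,
    integral_abs_sin_zero_natCast_mul_pi, smul_eq_mul]
  field_simp

theorem integral_neg_one_one_eq_integral_comp_cos_mul_sin {h : ℝ → ℝ} (hh : Continuous h) :
    ∫ x in (-1 : ℝ)..1, h x = ∫ θ in (0 : ℝ)..π, h (cos θ) * sin θ := by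
  have := integral_comp_mul_deriv (a := π) (b := 0) (f := cos) (f' := fun θ => -sin θ)
    (fun θ _ => hasDerivAt_cos θ) (by fun_prop) hh
  rw [cos_pi, cos_zero] at this
  rw [← this, integral_symm, ← intervalIntegral.integral_neg]
  simp only [Function.comp_apply, mul_neg, neg_neg]

theorem integral_abs_chebyshevU_eval (n : ℕ) :
    ∫ x in (-1 : ℝ)..1, |(Chebyshev.U ℝ n).eval x| = 2 := by
  rw [integral_neg_one_one_eq_integral_comp_cos_mul_sin (Chebyshev.U ℝ n).continuous.abs,
    ← integral_abs_sin_natCast_mul n.succ_ne_zero]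
  refine integral_congr fun θ hθ => ?_
  rw [Set.uIcc_of_le pi_pos.le] at hθ
  have := Chebyshev.U_real_cos θ n
  push_cast at this ⊢
  rw [← this, abs_mul, abs_of_nonneg (sin_nonneg_of_mem_Icc hθ)]

end

theorem integral_comp_affine_eq_mul_integral_neg_one_one {a b : ℝ} (hab : a ≠ b) (h : ℝ → ℝ) :
    ∫ x in a..b, h ((2 * x - a - b) / (b - a)) = (b - a) / 2 * ∫ y in (-1 : ℝ)..1, h y := by
  have hba : b - a ≠ 0 := sub_ne_zero.2 hab.symm
  have hc : 2 / (b - a) ≠ 0 := div_ne_zero two_ne_zero hba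
  have haffine : ∀ x, (2 * x - a - b) / (b - a) = 2 / (b - a) * x + -(a + b) / (b - a) :=
    fun x => by field_simp; ring
  simp_rw [haffine]
  rw [integral_comp_mul_add _ hc, smul_eq_mul, inv_div]
  congr 3 <;> field_simp <;> ring

theorem integral_abs_chebyshevU_eval_affine {a b : ℝ} (hab : a ≠ b) (n : ℕ) :
    ∫ x in a..b, |(Chebyshev.U ℝ n).eval ((2 * x - a - b) / (b - a))| = b - a := by
  rw [integral_comp_affine_eq_mul_integral_neg_one_one hab (fun y => |(Chebyshev.U ℝ n).eval y|),
    integral_abs_chebyshevU_eval]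
  ring

theorem abs_intervalIntegral_mul_le_lpNorm_top_mul {a b : ℝ} (hab : a ≤ b) {g φ : ℝ → ℝ}
    (hg : MemLp g ∞ (volume.restrict (Set.Icc a b))) (hφ : IntervalIntegrable φ volume a b) :
    |∫ x in a..b, g x * φ x| ≤
      lpNorm g ∞ (volume.restrict (Set.Icc a b)) * ∫ x in a..b, |φ x| := by
  rw [← intervalIntegral.integral_const_mul, ← Real.norm_eq_abs]
  refine norm_integral_le_of_norm_le hab ?_ (hφ.abs.const_mul _)
  have hbound := ae_restrict_iff' measurableSet_Icc |>.1 (ae_le_lpNorm_exponent_top hg)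
  filter_upwards [hbound] with x hx hxIoc
  rw [norm_mul, Real.norm_eq_abs (φ x)]
  exact mul_le_mul_of_nonneg_right (hx (Set.Ioc_subset_Icc_self hxIoc)) (abs_nonneg _)

theorem corrected_trapezoid_error_chebyshevU_general
    (a b : ℝ) (hab : a < b) (n : ℕ)
    (g : ℝ → ℝ)
    (hginf : MemLp g ⊤ (volume.restrict (Set.Icc a b))) :
    |((-1 : ℝ) ^ n / n.factorial) *
        ∫ x in a..b, g x *
          (((b - a) / 2) ^ n / 2 ^ n *
            (Polynomial.Chebyshev.U ℝ n).eval ((2 * x - a - b) / (b - a)))|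
      ≤ (eLpNorm g ⊤ (volume.restrict (Set.Icc a b))).toReal * (b - a) ^ (n + 1) /
          (2 ^ (2 * n) * n.factorial) := by
  set C : ℝ := ((b - a) / 2) ^ n / 2 ^ n with hCdef
  have hC : 0 ≤ C := by have := hab.le; positivity
  have hφ : Continuous fun x => C * (Chebyshev.U ℝ n).eval ((2 * x - a - b) / (b - a)) := by
    fun_prop
  have hφL1 : ∫ x in a..b, |C * (Chebyshev.U ℝ n).eval ((2 * x - a - b) / (b - a))| =
      C * (b - a) := by
    simp_rw [abs_mul, abs_of_nonneg hC]
    rw [intervalIntegral.integral_const_mul, integral_abs_chebyshevU_eval_affine hab.ne]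
  have hholder :=
    abs_intervalIntegral_mul_le_lpNorm_top_mul hab.le hginf (hφ.intervalIntegrable a b)
  rw [hφL1, ← toReal_eLpNorm hginf.1] at hholder
  have hsign : |(-1 : ℝ) ^ n / n.factorial| = 1 / n.factorial := by
    rw [abs_div, abs_pow, abs_neg, abs_one, one_pow, Nat.abs_cast]
  calc _ = 1 / n.factorial * |∫ x in a..b, g x *
          (C * (Chebyshev.U ℝ n).eval ((2 * x - a - b) / (b - a)))| := by rw [abs_mul, hsign]
    _ ≤ 1 / n.factorial *
          ((eLpNorm g ⊤ (volume.restrict (Set.Icc a b))).toReal * (C * (b - a))) := by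
      gcongr
    _ = _ := by
      rw [hCdef, div_pow, pow_succ, mul_comm 2 n, pow_mul]
      field_simp

/-- Sharp error bound for the corrected trapezoidal rule with the Chebyshev polynomial of
the second kind when `f⁽ⁿ⁾ ∈ L^∞([a,b])`. -/
theorem corrected_trapezoid_error_chebyshevU
    (a b : ℝ) (hab : a < b) (n : ℕ) (hn : 1 ≤ n)
    (f g : ℝ → ℝ)
    (hf : ContDiffOn ℝ (n - 1 : ℕ) f (Set.Icc a b))
    (hg : IntervalIntegrable g volume a b)
    (hFTC : ∀ x ∈ Set.Icc a b,
      iteratedDeriv (n - 1) f x = iteratedDeriv (n - 1) f a + ∫ t in a..x, g t)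
    (hginf : MemLp g ⊤ (volume.restrict (Set.Icc a b))) :
    |((-1 : ℝ) ^ n / n.factorial) *
        ∫ x in a..b, g x *
          (((b - a) / 2) ^ n / 2 ^ n *
            (Polynomial.Chebyshev.U ℝ n).eval ((2 * x - a - b) / (b - a)))|
      ≤ (eLpNorm g ⊤ (volume.restrict (Set.Icc a b))).toReal * (b - a) ^ (n + 1) /
          (2 ^ (2 * n) * n.factorial) :=
  corrected_trapezoid_error_chebyshevU_general a b hab n g hginf
end

section
/- If f has continuous (n-1)st pointwise derivative on [a,b] and the distributional derivative f^{(n)} is integrable in the continuous primitive integral sense, with Alexiewicz norm ‖f^{(n)}‖ = sup_{a≤x≤b} |f^{(n-1)}(x) − f^{(n-1)}(a)|, then with the polynomial φ_n(x) = 2^{1-2n}(b-a)^n [T_n((2x-a-b)/(b-a)) − 1], the quadrature error satisfies |E_n(f)| ≤ ‖f^{(n)}‖ (b-a)^n / ((n-1)! 2^{2n-2}). -/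
open MeasureTheory Polynomial intervalIntegral Real

lemma aux_abs_sin_int (n : ℕ) (hn : 1 ≤ n) :
    ∫ θ in (0:ℝ)..π, |Real.sin ((n:ℝ) * θ)| = 2 := by
  have hper : Function.Periodic (fun x => |Real.sin x|) π := fun x => by
    simp [Real.sin_add_pi]
  have hint : ∀ t₁ t₂ : ℝ, IntervalIntegrable (fun x => |Real.sin x|) volume t₁ t₂ :=
    fun t₁ t₂ => (Real.continuous_sin.abs).intervalIntegrable _ _
  have h1 : ∫ x in (0:ℝ)..π, |Real.sin x| = 2 := by
    rw [intervalIntegral.integral_congr (g := Real.sin) ?_, integral_sin]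
    · norm_num
    · intro x hx
      rw [Set.uIcc_of_le Real.pi_pos.le] at hx
      exact abs_of_nonneg (Real.sin_nonneg_of_nonneg_of_le_pi hx.1 hx.2)
  have h2 := hper.intervalIntegral_add_zsmul_eq (n : ℤ) 0 hint
  simp only [zero_add, zsmul_eq_mul, Int.cast_natCast, h1] at h2
  rw [intervalIntegral.integral_comp_mul_left (fun x => |Real.sin x|)
    (by positivity : (n:ℝ) ≠ 0)]
  rw [mul_zero, h2, smul_eq_mul]
  field_simp

lemma aux_arith (M B : ℝ) (n : ℕ) (hn : 1 ≤ n) :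
    1 / (n.factorial : ℝ) * (M * (B ^ n / 2 ^ (2 * n - 1) * (n : ℝ) * 2))
      = M * B ^ n / ((n - 1).factorial * 2 ^ (2 * n - 2)) := by
  obtain ⟨m, rfl⟩ : ∃ m, n = m + 1 := ⟨n - 1, (Nat.succ_pred_eq_of_pos hn).symm⟩
  have e1 : 2 * (m + 1) - 1 = 2 * m + 1 := by omega
  have e2 : 2 * (m + 1) - 2 = 2 * m := by omega
  rw [e1, e2, Nat.add_sub_cancel, Nat.factorial_succ]
  have h0 : (m.factorial : ℝ) ≠ 0 := by positivity
  have h2 : (2 : ℝ) ^ (2 * m) ≠ 0 := by positivity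
  have h1 : ((m : ℝ) + 1) ≠ 0 := by positivity
  push_cast
  field_simp
  ring

/-- Error bound for the corrected trapezoidal rule in the Alexiewicz norm.  Here
`F = f⁽ⁿ⁻¹⁾` is continuous, the Alexiewicz norm of the distributional derivative `f⁽ⁿ⁾`
is `sup_{x∈[a,b]} |F(x) − F(a)|`, and the error integral
`E_n(f) = ((-1)ⁿ/n!) ∫ f⁽ⁿ⁾ φₙ` is expressed by integration by parts through the
primitive `F − F(a)`, with `φₙ(x) = 2^{1-2n}(b-a)ⁿ[Tₙ((2x-a-b)/(b-a)) − 1]`. -/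
theorem corrected_trapezoid_error_alexiewicz
    (a b : ℝ) (hab : a < b) (n : ℕ) (hn : 1 ≤ n)
    (f : ℝ → ℝ) (hf : ContDiffOn ℝ (n - 1 : ℕ) f (Set.Icc a b)) :
    |((-1 : ℝ) ^ n / n.factorial) *
        ((iteratedDerivWithin (n - 1) f (Set.Icc a b) b
            - iteratedDerivWithin (n - 1) f (Set.Icc a b) a) *
            ((b - a) ^ n / 2 ^ (2 * n - 1) * ((Polynomial.Chebyshev.T ℝ n).eval 1 - 1))
          - ∫ x in a..b,
              (iteratedDerivWithin (n - 1) f (Set.Icc a b) x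
                - iteratedDerivWithin (n - 1) f (Set.Icc a b) a) *
              deriv (fun y => (b - a) ^ n / 2 ^ (2 * n - 1) *
                ((Polynomial.Chebyshev.T ℝ n).eval ((2 * y - a - b) / (b - a)) - 1)) x)|
      ≤ sSup ((fun x => |iteratedDerivWithin (n - 1) f (Set.Icc a b) x
              - iteratedDerivWithin (n - 1) f (Set.Icc a b) a|) '' Set.Icc a b) *
          (b - a) ^ n / ((n - 1).factorial * 2 ^ (2 * n - 2)) := by
  have hba : (0:ℝ) < b - a := sub_pos.2 hab
  set s : Set ℝ := Set.Icc a b with hs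
  set F : ℝ → ℝ := iteratedDerivWithin (n - 1) f s with hF
  set G : ℝ → ℝ := fun x => F x - F a with hG
  set M : ℝ := sSup ((fun x => |F x - F a|) '' s) with hMdef
  set C : ℝ := (b - a) ^ n / 2 ^ (2 * n - 1) with hCdef
  have hC : 0 ≤ C := by positivity
  set p : ℝ[X] := Polynomial.Chebyshev.T ℝ (n : ℤ) with hp
  set u : ℝ → ℝ := fun y => (2 * y - a - b) / (b - a) with hu
  -- Chebyshev value at 1
  have hT1 : p.eval 1 = 1 := by
    have h := Polynomial.Chebyshev.T_real_cos (θ := 0) (n := (n : ℤ))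
    simpa [hp] using h
  -- derivative of u
  have hud : ∀ y : ℝ, HasDerivAt u (2 / (b - a)) y := by
    intro y
    have h1 : HasDerivAt (fun y : ℝ => 2 * y - a - b) 2 y := by
      simpa using (((hasDerivAt_id y).const_mul 2).sub_const a).sub_const b
    simpa using h1.div_const (b - a)
  set D : ℝ → ℝ := fun y => C * (p.derivative.eval (u y) * (2 / (b - a))) with hDdef
  have hφ : ∀ y : ℝ, HasDerivAt
      (fun y => C * (p.eval (u y) - 1)) (D y) y := by
    intro y
    exact (((p.hasDerivAt (u y)).comp y (hud y)).sub_const 1).const_mul C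
  have hDeq : deriv (fun y => (b - a) ^ n / 2 ^ (2 * n - 1) *
      ((Polynomial.Chebyshev.T ℝ n).eval ((2 * y - a - b) / (b - a)) - 1)) = D := by
    funext y
    exact (hφ y).deriv
  have hDc : Continuous D :=
    continuous_const.mul (((p.derivative.continuous_aeval).comp
      (by continuity)).mul continuous_const)
  -- continuity of G and sup bound
  have hFc : ContinuousOn F s :=
    hf.continuousOn_iteratedDerivWithin le_rfl (uniqueDiffOn_Icc hab)
  have hGc : ContinuousOn G s := hFc.sub continuousOn_const
  have hbdd : BddAbove ((fun x => |F x - F a|) '' s) :=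
    (isCompact_Icc.image_of_continuousOn hGc.abs).bddAbove
  have hM : ∀ x ∈ s, |G x| ≤ M := fun x hx => le_csSup hbdd (Set.mem_image_of_mem _ hx)
  have hM0 : 0 ≤ M :=
    (abs_nonneg (G a)).trans (hM a (Set.left_mem_Icc.2 hab.le))
  -- substitution x(θ)
  set X : ℝ → ℝ := fun θ => (a + b) / 2 - (b - a) / 2 * Real.cos θ with hX
  have hXd : ∀ θ : ℝ, HasDerivAt X ((b - a) / 2 * Real.sin θ) θ := by
    intro θ
    have := ((Real.hasDerivAt_cos θ).const_mul ((b - a) / 2)).const_sub ((a + b) / 2)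
    simpa [mul_neg, neg_neg] using this
  have hX0 : X 0 = a := by simp [hX]; ring
  have hXpi : X π = b := by simp [hX, Real.cos_pi]; ring
  -- key pointwise identity
  have key : ∀ θ : ℝ, D (X θ) * ((b - a) / 2 * Real.sin θ)
      = C * (Real.sin ((n : ℝ) * (π - θ)) * n) := by
    intro θ
    have h1 : HasDerivAt (fun θ => C * (p.eval (u (X θ)) - 1))
        (D (X θ) * ((b - a) / 2 * Real.sin θ)) θ := (hφ (X θ)).comp θ (hXd θ)
    have hcomp : (fun θ => C * (p.eval (u (X θ)) - 1))
        = fun θ => C * (Real.cos ((n : ℝ) * (π - θ)) - 1) := by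
      funext θ
      have huX : u (X θ) = Real.cos (π - θ) := by
        rw [Real.cos_pi_sub]
        simp only [hu, hX]
        rw [div_eq_iff hba.ne']
        ring
      rw [huX, hp]
      rw [Polynomial.Chebyshev.T_real_cos]
      norm_num
    have h2 : HasDerivAt (fun θ => C * (Real.cos ((n : ℝ) * (π - θ)) - 1))
        (C * (Real.sin ((n : ℝ) * (π - θ)) * n)) θ := by
      have hin : HasDerivAt (fun θ : ℝ => (n : ℝ) * (π - θ)) (-(n : ℝ)) θ := by
        simpa using ((hasDerivAt_id θ).const_sub π).const_mul (n : ℝ)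
      have := (((Real.hasDerivAt_cos ((n : ℝ) * (π - θ))).comp θ hin).sub_const 1).const_mul C
      rw [show C * (Real.sin ((n : ℝ) * (π - θ)) * n)
          = C * (-Real.sin ((n : ℝ) * (π - θ)) * -(n : ℝ)) by ring]
      exact this
    rw [hcomp] at h1
    exact h1.unique h2
  -- change of variables
  have habs : ∀ θ ∈ Set.uIcc (0:ℝ) π, ((b - a) / 2 * Real.sin θ) • |D (X θ)|
      = C * (n : ℝ) * |Real.sin ((n : ℝ) * (π - θ))| := by
    intro θ hθ
    rw [Set.uIcc_of_le Real.pi_pos.le] at hθ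
    have hsin : 0 ≤ Real.sin θ := Real.sin_nonneg_of_nonneg_of_le_pi hθ.1 hθ.2
    have hfac : 0 ≤ (b - a) / 2 * Real.sin θ := by positivity
    rw [smul_eq_mul, mul_comm ((b - a) / 2 * Real.sin θ), ← abs_of_nonneg hfac,
      ← abs_mul, key θ, abs_mul, abs_mul, abs_of_nonneg hC,
      Nat.abs_cast, mul_comm (|Real.sin ((n : ℝ) * (π - θ))|), mul_assoc]
  have hcov : ∫ t in a..b, |D t| = C * (n : ℝ) * 2 := by
    rw [← hX0, ← hXpi,
      ← integral_comp_smul_deriv (fun θ _ => hXd θ)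
        ((continuous_const.mul Real.continuous_sin).continuousOn) hDc.abs]
    simp only [Function.comp_apply]
    rw [intervalIntegral.integral_congr habs]
    rw [intervalIntegral.integral_const_mul]
    have hsub := intervalIntegral.integral_comp_sub_left
      (fun t => |Real.sin ((n : ℝ) * t)|) π (a := 0) (b := π)
    rw [hsub]
    norm_num [aux_abs_sin_int n hn]
  -- bound the main integral
  set I : ℝ := ∫ x in a..b, G x * D x with hI
  have hIbound : |I| ≤ M * (C * (n : ℝ) * 2) := by
    have h1 : |I| ≤ ∫ x in a..b, |G x * D x| :=
      intervalIntegral.abs_integral_le_integral_abs hab.le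
    have hint1 : IntervalIntegrable (fun x => |G x * D x|) volume a b := by
      apply ContinuousOn.intervalIntegrable
      rw [Set.uIcc_of_le hab.le]
      exact (hGc.mul hDc.continuousOn).abs
    have hint2 : IntervalIntegrable (fun x => M * |D x|) volume a b :=
      (continuous_const.mul hDc.abs).intervalIntegrable _ _
    have h2 : ∫ x in a..b, |G x * D x| ≤ ∫ x in a..b, M * |D x| := by
      apply intervalIntegral.integral_mono_on hab.le hint1 hint2
      intro x hx
      rw [abs_mul]
      exact mul_le_mul_of_nonneg_right (hM x hx) (abs_nonneg _)
    have h3 : ∫ x in a..b, M * |D x| = M * (C * (n : ℝ) * 2) := by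
      rw [intervalIntegral.integral_const_mul, hcov]
    linarith
  -- final assembly
  rw [hDeq, hT1]
  have hzero : (F b - F a) * (C * (1 - 1)) = 0 := by ring
  rw [show (iteratedDerivWithin (n - 1) f (Set.Icc a b) b
      - iteratedDerivWithin (n - 1) f (Set.Icc a b) a) *
      ((b - a) ^ n / 2 ^ (2 * n - 1) * ((1:ℝ) - 1)) = 0 from by ring]
  rw [zero_sub, abs_mul, abs_neg]
  have hfac : |((-1 : ℝ) ^ n / n.factorial)| = 1 / n.factorial := by
    rw [abs_div, abs_pow, abs_neg, abs_one, one_pow, abs_of_pos]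
    exact_mod_cast n.factorial_pos
  rw [hfac]
  have hle : 1 / (n.factorial : ℝ) * |I| ≤ 1 / (n.factorial : ℝ) * (M * (C * (n : ℝ) * 2)) := by
    apply mul_le_mul_of_nonneg_left hIbound
    positivity
  rw [hCdef] at hle
  exact hle.trans_eq (aux_arith M (b - a) n hn)
end
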